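/- Let θ₀, θ_R, θ₀', θ_R' ∈ S_{2π} and z ∈ ℂ \ σ(H_{θ₀,θ_R}). Then cos(θ₀) + sin(θ₀)u'_{+,θ_R}(z,0) ≠ 0 and cos(θ_R) − sin(θ_R)u'_{−,θ₀}(z,R) ≠ 0, and the entries of the boundary data map are: (Λ_{θ₀,θ_R}^{θ₀',θ_R'}(z))_{1,1} = (cos(θ₀') + sin(θ₀')u'_{+,θ_R}(z,0))/(cos(θ₀) + sin(θ₀)u'_{+,θ_R}(z,0)); (Λ_{θ₀,θ_R}^{θ₀',θ_R'}(z))_{1,2} = (cos(θ₀')u_{−,θ₀}(z,0) + sin(θ₀')u'_{−,θ₀}(z,0))/(cos(θ_R) − sin(θ_R)u'_{−,θ₀}(z,R)); (Λ_{θ₀,θ_R}^{θ₀',θ_R'}(z))_{2,1} = (cos(θ_R')u_{+,θ_R}(z,R) − sin(θ_R')u'_{+,θ_R}(z,R))/(cos(θ₀) + sin(θ₀)u'_{+,θ_R}(z,0)); (Λ_{θ₀,θ_R}^{θ₀',θ_R'}(z))_{2,2} = (cos(θ_R') − sin(θ_R')u'_{−,θ₀}(z,R))/(cos(θ_R) −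 sin(θ_R)u'_{−,θ₀}(z,R)). -/

import Mathlib

open MeasureTheory Set Complex Filter Matrix
open scoped Classical

noncomputable section

/-- The strip `S_{2π} = {z ∈ ℂ | 0 ≤ Re z < 2π}`. -/
def S2pi : Set ℂ := {z : ℂ | 0 ≤ z.re ∧ z.re < 2 * Real.pi}

/-- `u` (with derivative `u'`) solves the inhomogeneous Schrödinger equation
`-u'' + V u - z u = f` on `[0,R]`: `u` is differentiable with derivative `u'`
on `[0,R]`, and `u'` is absolutely continuous with `u'' = (V - z) u - f` (a.e.),
encoded in integrated form. -/
def IsSolInhom (R : ℝ) (V : ℝ → ℂ) (z : ℂ) (f u u' : ℝ → ℂ) : Prop :=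
  (∀ x ∈ Icc (0:ℝ) R, HasDerivAt u (u' x) x) ∧
  (∀ x ∈ Icc (0:ℝ) R, u' x = u' 0 + ∫ t in (0:ℝ)..x, ((V t - z) * u t - f t))

/-- `u` (with derivative `u'`) solves the homogeneous equation `-u'' + V u = z u`
on `[0,R]`. -/
def IsSol (R : ℝ) (V : ℝ → ℂ) (z : ℂ) (u u' : ℝ → ℂ) : Prop :=
  IsSolInhom R V z 0 u u'

/-- The boundary trace map `γ_{θ₀,θ_R}(u) ∈ ℂ²`. -/
def bTrace (R : ℝ) (θ0 θR : ℂ) (u u' : ℝ → ℂ) : Fin 2 → ℂ :=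
  ![Complex.cos θ0 * u 0 + Complex.sin θ0 * u' 0,
    Complex.cos θR * u R - Complex.sin θR * u' R]

/-- `z` is an eigenvalue of the Schrödinger operator `H_{θ₀,θ_R}` in `L²((0,R))`.
Since `H_{θ₀,θ_R}` has purely discrete spectrum, the spectrum `σ(H_{θ₀,θ_R})`
coincides with the set of its eigenvalues. -/
def IsEigenvalue (R : ℝ) (V : ℝ → ℂ) (θ0 θR z : ℂ) : Prop :=
  ∃ u u' : ℝ → ℂ, IsSol R V z u u' ∧ bTrace R θ0 θR u u' = 0 ∧
    ∃ x ∈ Icc (0:ℝ) R, u x ≠ 0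

/-- The boundary data map `Λ_{θ₀,θ_R}^{θ₀',θ_R'}(z) : ℂ² → ℂ²`: it sends the
`(θ₀,θ_R)`-boundary data of a solution of `-u'' + V u = z u` to its
`(θ₀',θ_R')`-boundary data.  (It is defined via a choice of solution; for
`z ∉ σ(H_{θ₀,θ_R})` the solution exists and is unique, so the map is well
defined there.) -/
def lambdaMap (R : ℝ) (V : ℝ → ℂ) (θ0 θR θ0' θR' z : ℂ) (c : Fin 2 → ℂ) :
    Fin 2 → ℂ :=
  if h : ∃ u : (ℝ → ℂ) × (ℝ → ℂ), IsSol R V z u.1 u.2 ∧ bTrace R θ0 θR u.1 u.2 = c then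
    bTrace R θ0' θR' h.choose.1 h.choose.2
  else 0

/-- The boundary data map `Λ_{θ₀,θ_R}^{θ₀',θ_R'}(z)` as a `2 × 2` complex matrix. -/
def lambdaMat (R : ℝ) (V : ℝ → ℂ) (θ0 θR θ0' θR' z : ℂ) :
    Matrix (Fin 2) (Fin 2) ℂ :=
  Matrix.of fun i j => lambdaMap R V θ0 θR θ0' θR' z (Pi.single j 1) i

/-- The diagonal matrix `S_{α,β} = diag(sin α, sin β)`. -/
def Smat (α β : ℂ) : Matrix (Fin 2) (Fin 2) ℂ :=
  Matrix.diagonal ![Complex.sin α, Complex.sin β]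

end

/-! Since `z` is not an eigenvalue, a solution is determined by its `(θ₀,θ_R)`-boundary data:
the difference of two solutions with the same data is a solution with data `0`, hence vanishes
on `[0,R]` together with its derivative. The solutions `u₊` and `u₋` have data `(d₀, 0)` and
`(0, d_R)`, where `d₀, d_R ≠ 0` because otherwise they would be eigenfunctions. So `u₊ / d₀` and
`u₋ / d_R` are the solutions with data `e₁` and `e₂`, and the columns of `Λ` are their
`(θ₀',θ_R')`-boundary data. -/

section

variable {R : ℝ} {V : ℝ → ℂ} {z : ℂ}

theorem bTrace_smul (θ0 θR c : ℂ) (u u' : ℝ → ℂ) :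
    bTrace R θ0 θR (c • u) (c • u') = c • bTrace R θ0 θR u u' := by
  ext i; fin_cases i <;> simp [bTrace] <;> ring

theorem bTrace_sub (θ0 θR : ℂ) (u₁ u₁' u₂ u₂' : ℝ → ℂ) :
    bTrace R θ0 θR (u₁ - u₂) (u₁' - u₂') = bTrace R θ0 θR u₁ u₁' - bTrace R θ0 θR u₂ u₂' := by
  ext i; fin_cases i <;> simp [bTrace] <;> ring

theorem IsSol.continuousOn {u u' : ℝ → ℂ} (h : IsSol R V z u u') : ContinuousOn u (Icc 0 R) :=
  fun x hx => (h.1 x hx).continuousAt.continuousWithinAt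

theorem IsSol.const_smul {u u' : ℝ → ℂ} (h : IsSol R V z u u') (c : ℂ) :
    IsSol R V z (c • u) (c • u') := by
  refine ⟨fun x hx => (h.1 x hx).const_smul c, fun x hx => ?_⟩
  have hx' := h.2 x hx
  simp only [Pi.zero_apply, sub_zero, Pi.smul_apply, smul_eq_mul] at hx' ⊢
  simp_rw [mul_left_comm _ c, intervalIntegral.integral_const_mul, hx', mul_add]

theorem intervalIntegrable_mul_of_continuousOn {V u : ℝ → ℂ} (hV : IntegrableOn V (Icc 0 R))
    (hu : ContinuousOn u (Icc 0 R)) {x : ℝ} (hx : x ∈ Icc 0 R) :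
    IntervalIntegrable (fun t => V t * u t) volume 0 x := by
  refine IntegrableOn.intervalIntegrable ?_
  rw [uIcc_of_le hx.1]
  exact (hV.mul_continuousOn hu isCompact_Icc).mono_set (Icc_subset_Icc_right hx.2)

theorem IsSol.sub (hV : IntegrableOn V (Icc 0 R)) {u₁ u₁' u₂ u₂' : ℝ → ℂ}
    (h₁ : IsSol R V z u₁ u₁') (h₂ : IsSol R V z u₂ u₂') :
    IsSol R V z (u₁ - u₂) (u₁' - u₂') := by
  have hVz : IntegrableOn (fun t => V t - z) (Icc 0 R) :=
    hV.sub (integrableOn_const (by simp) (by simp))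
  refine ⟨fun x hx => (h₁.1 x hx).sub (h₂.1 x hx), fun x hx => ?_⟩
  have e₁ := h₁.2 x hx
  have e₂ := h₂.2 x hx
  simp only [Pi.zero_apply, sub_zero, Pi.sub_apply, mul_sub] at e₁ e₂ ⊢
  rw [intervalIntegral.integral_sub (intervalIntegrable_mul_of_continuousOn hVz h₁.continuousOn hx)
    (intervalIntegrable_mul_of_continuousOn hVz h₂.continuousOn hx), e₁, e₂]
  ring

theorem hasDerivAt_eq_zero_of_eqOn_Icc {E : Type*} [NormedAddCommGroup E] [NormedSpace ℝ E]
    {a b x : ℝ} (hab : a < b) (hx : x ∈ Icc a b) {f : ℝ → E} {f' : E}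
    (hf : HasDerivAt f f' x) (h0 : EqOn f 0 (Icc a b)) : f' = 0 :=
  (uniqueDiffOn_Icc hab x hx).eq_deriv _ hf.hasDerivWithinAt
    ((hasDerivWithinAt_const x _ 0).congr_of_mem h0 hx)

variable {θ0 θR : ℂ}

theorem IsSol.eqOn_zero_of_bTrace_eq_zero (hz : ¬ IsEigenvalue R V θ0 θR z) {u u' : ℝ → ℂ}
    (h : IsSol R V z u u') (htr : bTrace R θ0 θR u u' = 0) : EqOn u 0 (Icc 0 R) := by
  by_contra hne
  obtain ⟨x, hx, hux⟩ := not_forall₂.mp hne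
  exact hz ⟨u, u', h, htr, x, hx, hux⟩

theorem IsSol.bTrace_eq_of_bTrace_eq (hR : 0 < R) (hV : IntegrableOn V (Icc 0 R))
    (hz : ¬ IsEigenvalue R V θ0 θR z) {u₁ u₁' u₂ u₂' : ℝ → ℂ}
    (h₁ : IsSol R V z u₁ u₁') (h₂ : IsSol R V z u₂ u₂')
    (htr : bTrace R θ0 θR u₁ u₁' = bTrace R θ0 θR u₂ u₂') (θ0' θR' : ℂ) :
    bTrace R θ0' θR' u₁ u₁' = bTrace R θ0' θR' u₂ u₂' := by
  have hw := h₁.sub hV h₂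
  have hw0 := hw.eqOn_zero_of_bTrace_eq_zero hz (by rw [bTrace_sub, htr, sub_self])
  have h0 : (0 : ℝ) ∈ Icc 0 R := ⟨le_rfl, hR.le⟩
  have hR' : R ∈ Icc 0 R := ⟨hR.le, le_rfl⟩
  have hw'0 := hasDerivAt_eq_zero_of_eqOn_Icc hR h0 (hw.1 0 h0) hw0
  have hw'R := hasDerivAt_eq_zero_of_eqOn_Icc hR hR' (hw.1 R hR') hw0
  rw [← sub_eq_zero, ← bTrace_sub]
  ext i
  fin_cases i <;> simp [bTrace, hw0 h0, hw0 hR', hw'0, hw'R]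

theorem lambdaMap_bTrace (hR : 0 < R) (hV : IntegrableOn V (Icc 0 R))
    (hz : ¬ IsEigenvalue R V θ0 θR z) (θ0' θR' : ℂ) {u u' : ℝ → ℂ} (h : IsSol R V z u u') :
    lambdaMap R V θ0 θR θ0' θR' z (bTrace R θ0 θR u u') = bTrace R θ0' θR' u u' := by
  have hex : ∃ v : (ℝ → ℂ) × (ℝ → ℂ), IsSol R V z v.1 v.2 ∧
      bTrace R θ0 θR v.1 v.2 = bTrace R θ0 θR u u' := ⟨(u, u'), h, rfl⟩
  rw [lambdaMap, dif_pos hex]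
  exact hex.choose_spec.1.bTrace_eq_of_bTrace_eq hR hV hz h hex.choose_spec.2 θ0' θR'

theorem lambdaMat_apply_of_bTrace_eq (hR : 0 < R) (hV : IntegrableOn V (Icc 0 R))
    (hz : ¬ IsEigenvalue R V θ0 θR z) (θ0' θR' : ℂ) {u u' : ℝ → ℂ} (h : IsSol R V z u u')
    {d : ℂ} (hd : d ≠ 0) {j : Fin 2} (htr : bTrace R θ0 θR u u' = d • Pi.single j 1) (i : Fin 2) :
    lambdaMat R V θ0 θR θ0' θR' z i j = bTrace R θ0' θR' u u' i / d := by
  have hcol : Pi.single j 1 = bTrace R θ0 θR (d⁻¹ • u) (d⁻¹ • u') := by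
    rw [bTrace_smul, htr, smul_smul, inv_mul_cancel₀ hd, one_smul]
  rw [lambdaMat, of_apply, hcol, lambdaMap_bTrace hR hV hz θ0' θR' (h.const_smul _), bTrace_smul,
    Pi.smul_apply, smul_eq_mul, inv_mul_eq_div]

end

theorem lambda_entries_general
    (R : ℝ) (hR : 0 < R) (V : ℝ → ℂ) (hV : IntegrableOn V (Ioo 0 R))
    (θ0 θR θ0' θR' : ℂ)
    (z : ℂ) (hz : ¬ IsEigenvalue R V θ0 θR z)
    (up up' um um' : ℝ → ℂ)
    (hup : IsSol R V z up up') (hup0 : up 0 = 1)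
    (hupR : Complex.cos θR * up R - Complex.sin θR * up' R = 0)
    (hum : IsSol R V z um um') (humR : um R = 1)
    (hum0 : Complex.cos θ0 * um 0 + Complex.sin θ0 * um' 0 = 0) :
    Complex.cos θ0 + Complex.sin θ0 * up' 0 ≠ 0 ∧
    Complex.cos θR - Complex.sin θR * um' R ≠ 0 ∧
    lambdaMat R V θ0 θR θ0' θR' z 0 0 =
      (Complex.cos θ0' + Complex.sin θ0' * up' 0) /
        (Complex.cos θ0 + Complex.sin θ0 * up' 0) ∧
    lambdaMat R V θ0 θR θ0' θR' z 0 1 =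
      (Complex.cos θ0' * um 0 + Complex.sin θ0' * um' 0) /
        (Complex.cos θR - Complex.sin θR * um' R) ∧
    lambdaMat R V θ0 θR θ0' θR' z 1 0 =
      (Complex.cos θR' * up R - Complex.sin θR' * up' R) /
        (Complex.cos θ0 + Complex.sin θ0 * up' 0) ∧
    lambdaMat R V θ0 θR θ0' θR' z 1 1 =
      (Complex.cos θR' - Complex.sin θR' * um' R) /
        (Complex.cos θR - Complex.sin θR * um' R) := by
  have hVI : IntegrableOn V (Icc 0 R) := (integrableOn_Icc_iff_integrableOn_Ioo).mpr hV
  set d0 := Complex.cos θ0 + Complex.sin θ0 * up' 0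
  set dR := Complex.cos θR - Complex.sin θR * um' R
  have hpTr : bTrace R θ0 θR up up' = d0 • Pi.single 0 1 := by
    ext i; fin_cases i <;> simp [bTrace, d0, hup0, hupR]
  have hmTr : bTrace R θ0 θR um um' = dR • Pi.single 1 1 := by
    ext i; fin_cases i <;> simp [bTrace, dR, humR, hum0]
  have hd0 : d0 ≠ 0 := fun h => by
    simpa [hup0] using hup.eqOn_zero_of_bTrace_eq_zero hz (by simp [hpTr, h])
      (left_mem_Icc.mpr hR.le)
  have hdR : dR ≠ 0 := fun h => by
    simpa [humR] using hum.eqOn_zero_of_bTrace_eq_zero hz (by simp [hmTr, h])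
      (right_mem_Icc.mpr hR.le)
  have hcol0 := lambdaMat_apply_of_bTrace_eq hR hVI hz θ0' θR' hup hd0 hpTr
  have hcol1 := lambdaMat_apply_of_bTrace_eq hR hVI hz θ0' θR' hum hdR hmTr
  refine ⟨hd0, hdR, ?_, ?_, ?_, ?_⟩ <;> simp [hcol0, hcol1, bTrace, hup0, humR]

/-- Let `θ₀, θ_R, θ₀', θ_R' ∈ S_{2π}`, `z ∈ ℂ \ σ(H_{θ₀,θ_R})`,
and let `u₊ = u_{+,θ_R}(z,·)` and `u₋ = u_{−,θ₀}(z,·)` be the distinguished basis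
of solutions of `-u'' + V u = z u` determined by `u₊(z,0) = 1`,
`cos θ_R u₊(z,R) − sin θ_R u₊'(z,R) = 0`, `u₋(z,R) = 1`,
`cos θ₀ u₋(z,0) + sin θ₀ u₋'(z,0) = 0`.  Then the denominators
`cos θ₀ + sin θ₀ u₊'(z,0)` and `cos θ_R − sin θ_R u₋'(z,R)` are nonzero and the
four entries of `Λ_{θ₀,θ_R}^{θ₀',θ_R'}(z)` are given by the displayed quotients. -/
theorem lambda_entries
    (R : ℝ) (hR : 0 < R) (V : ℝ → ℂ) (hV : IntegrableOn V (Ioo 0 R))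
    (θ0 θR θ0' θR' : ℂ)
    (hθ0 : θ0 ∈ S2pi) (hθR : θR ∈ S2pi) (hθ0' : θ0' ∈ S2pi) (hθR' : θR' ∈ S2pi)
    (z : ℂ) (hz : ¬ IsEigenvalue R V θ0 θR z)
    (up up' um um' : ℝ → ℂ)
    (hup : IsSol R V z up up') (hup0 : up 0 = 1)
    (hupR : Complex.cos θR * up R - Complex.sin θR * up' R = 0)
    (hum : IsSol R V z um um') (humR : um R = 1)
    (hum0 : Complex.cos θ0 * um 0 + Complex.sin θ0 * um' 0 = 0) :
    Complex.cos θ0 + Complex.sin θ0 * up' 0 ≠ 0 ∧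
    Complex.cos θR - Complex.sin θR * um' R ≠ 0 ∧
    lambdaMat R V θ0 θR θ0' θR' z 0 0 =
      (Complex.cos θ0' + Complex.sin θ0' * up' 0) /
        (Complex.cos θ0 + Complex.sin θ0 * up' 0) ∧
    lambdaMat R V θ0 θR θ0' θR' z 0 1 =
      (Complex.cos θ0' * um 0 + Complex.sin θ0' * um' 0) /
        (Complex.cos θR - Complex.sin θR * um' R) ∧
    lambdaMat R V θ0 θR θ0' θR' z 1 0 =
      (Complex.cos θR' * up R - Complex.sin θR' * up' R) /
        (Complex.cos θ0 + Complex.sin θ0 * up' 0) ∧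
    lambdaMat R V θ0 θR θ0' θR' z 1 1 =
      (Complex.cos θR' - Complex.sin θR' * um' R) /
        (Complex.cos θR - Complex.sin θR * um' R) :=
  lambda_entries_general R hR V hV θ0 θR θ0' θR' z hz up up' um um' hup hup0 hupR hum humR hum0
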